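/- As x → ∞, ∑_{1 ≤ n ≤ x/2} 1/(n² log²(x/n)) = (π²/6)·(1/log² x) + O(1/log³ x). -/

import Mathlib

/-!
Write `ℓ = log (x / n) = log x - log n`. Replacing `ℓ` by `log x` in the `n`-th term costs at most
`8 (log n + log³ n / log² 2) / (n² log³ x)`: either `ℓ ≥ (log x) / 2`, or `log n > (log x) / 2`
and then `ℓ ≥ log 2` suffices. These errors sum to `O(1 / log³ x)` because `∑ log³ n / n²`
converges. What is left is `(∑_{n ≤ x/2} 1 / n²) / log² x`, and the tail of the Basel series
beyond `x / 2` is `O(1 / x)`, which is `O(1 / log x)`.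
-/

open Filter Asymptotics Finset Real

theorem summable_log_pow_div_rpow (k : ℕ) {s : ℝ} (hs : 1 < s) :
    Summable fun n : ℕ => log n ^ k / (n : ℝ) ^ s := by
  set t := (s + 1) / 2
  have ht : 1 < t := by simp only [t]; linarith
  have hlog : (fun x : ℝ => log x ^ k) =o[atTop] fun x => x ^ (s - t) := by
    simpa using isLittleO_log_rpow_rpow_atTop (k : ℝ) (by simp only [t]; linarith : 0 < s - t)
  have hbig : (fun x : ℝ => log x ^ k / x ^ s) =O[atTop] fun x => (x ^ t)⁻¹ := by
    refine (hlog.isBigO.mul (isBigO_refl (fun x : ℝ => (x ^ s)⁻¹) atTop)).congr' .rfl ?_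
    filter_upwards [eventually_gt_atTop 0] with x hx
    rw [rpow_sub hx, div_mul_eq_mul_div, mul_inv_cancel₀ (by positivity), one_div]
  exact summable_of_isBigO_nat (summable_nat_rpow_inv.mpr ht)
    (hbig.comp_tendsto tendsto_natCast_atTop_atTop)

theorem one_div_sq_sub_one_div_sq_le {c l L : ℝ} (hc : 0 < c) (hcl : c ≤ l) (hlL : l ≤ L) :
    1 / l ^ 2 - 1 / L ^ 2 ≤ 8 * ((L - l) + (L - l) ^ 3 / c ^ 2) / L ^ 3 := by
  have hl : 0 < l := hc.trans_le hcl
  have hL : 0 < L := hl.trans_le hlL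
  set a := L - l
  have ha : 0 ≤ a := sub_nonneg.2 hlL
  have hdiff : 1 / l ^ 2 - 1 / L ^ 2 ≤ 2 * a / (l ^ 2 * L) := by
    rw [div_sub_div _ _ (by positivity) (by positivity),
      div_le_div_iff₀ (by positivity) (by positivity)]
    nlinarith [mul_nonneg (mul_nonneg (sq_nonneg a) (sq_nonneg l)) hL.le]
  rcases le_or_gt L (2 * l) with h | h
  · calc 1 / l ^ 2 - 1 / L ^ 2 ≤ 2 * a / (l ^ 2 * L) := hdiff
      _ ≤ 8 * a / L ^ 3 := by
        rw [div_le_div_iff₀ (by positivity) (by positivity)]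
        nlinarith [mul_nonneg (mul_nonneg ha hL.le)
          (mul_nonneg hL.le (by linarith : 0 ≤ 2 * l - L))]
      _ ≤ _ := by gcongr; exact le_add_of_nonneg_right (by positivity)
  · calc 1 / l ^ 2 - 1 / L ^ 2 ≤ 2 * a / (l ^ 2 * L) := hdiff
      _ ≤ 2 * a / (c ^ 2 * L) := by gcongr
      _ ≤ 8 * (a ^ 3 / c ^ 2) / L ^ 3 := by
        rw [mul_div_assoc', div_div, div_le_div_iff₀ (by positivity) (by positivity)]
        nlinarith [mul_nonneg (mul_nonneg ha (mul_pos hL (pow_pos hc 2)).le)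
          (by linarith : 0 ≤ 2 * a - L)]
      _ ≤ _ := by gcongr; exact le_add_of_nonneg_left ha

theorem abs_one_div_sq_mul_log_sq_sub_le {x : ℝ} {n : ℕ} (hn : 1 ≤ n) (hnx : 2 * n ≤ x) :
    |1 / ((n : ℝ) ^ 2 * log (x / n) ^ 2) - 1 / (n : ℝ) ^ 2 * (1 / log x ^ 2)| ≤
      8 * (log n + log n ^ 3 / log 2 ^ 2) / (n : ℝ) ^ 2 * (1 / log x ^ 3) := by
  have hn0 : (0 : ℝ) < n := by exact_mod_cast hn
  have hlog_div : log (x / n) = log x - log n := log_div (by linarith) hn0.ne'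
  have hc : 0 < log 2 := log_pos one_lt_two
  have hcl : log 2 ≤ log (x / n) := log_le_log two_pos ((le_div_iff₀ hn0).2 hnx)
  have hlL : log (x / n) ≤ log x := by
    rw [hlog_div]; linarith [log_natCast_nonneg n]
  have hgap : log x - log (x / n) = log n := by rw [hlog_div]; ring
  have hmain := one_div_sq_sub_one_div_sq_le hc hcl hlL
  rw [hgap] at hmain
  have hl : 0 < log (x / n) := hc.trans_le hcl
  have hnonneg : 0 ≤ 1 / log (x / n) ^ 2 - 1 / log x ^ 2 :=
    sub_nonneg.2 (one_div_le_one_div_of_le (by positivity) (pow_le_pow_left₀ hl.le hlL 2))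
  rw [← one_div_mul_one_div, ← mul_sub, abs_of_nonneg (mul_nonneg (by positivity) hnonneg)]
  calc _ ≤ 1 / (n : ℝ) ^ 2 * (8 * (log n + log n ^ 3 / log 2 ^ 2) / log x ^ 3) := by gcongr
    _ = _ := by ring

theorem abs_pi_sq_div_six_sub_sum_Icc_le (N : ℕ) :
    |π ^ 2 / 6 - ∑ n ∈ Icc 1 N, 1 / (n : ℝ) ^ 2| ≤ 2 / ((N : ℝ) + 1) := by
  have hpartial : ∀ M, N + 1 ≤ M →
      ∑ n ∈ range M, 1 / (n : ℝ) ^ 2 ≤ ∑ n ∈ Icc 1 N, 1 / (n : ℝ) ^ 2 + 2 / ((N : ℝ) + 1) := by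
    intro M hM
    rw [← sum_range_add_sum_Ico _ hM, range_eq_Ico, sum_eq_sum_Ico_succ_bot N.succ_pos,
      zero_add, Nat.succ_eq_add_one, Ico_add_one_right_eq_Icc, Ico_add_one_left_eq_Ioo]
    simpa [one_div] using sum_Ioo_inv_sq_le (α := ℝ) N M
  have hle := hasSum_zeta_two.summable.sum_le_tsum (Icc 1 N) (fun n _ => by positivity)
  rw [hasSum_zeta_two.tsum_eq] at hle
  have hge := le_of_tendsto hasSum_zeta_two.tendsto_sum_nat (eventually_atTop.2 ⟨N + 1, hpartial⟩)
  rw [abs_of_nonneg (sub_nonneg.2 hle)]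
  linarith

theorem isBigO_sum_Icc_floor_half_sub :
    (fun x : ℝ => ∑ n ∈ Icc 1 ⌊x / 2⌋₊,
        (1 / ((n : ℝ) ^ 2 * log (x / n) ^ 2) - 1 / (n : ℝ) ^ 2 * (1 / log x ^ 2)))
      =O[atTop] fun x => 1 / log x ^ 3 := by
  have hsummable :
      Summable fun n : ℕ => 8 * (log n + log n ^ 3 / log 2 ^ 2) / (n : ℝ) ^ 2 := by
    have h1 := summable_log_pow_div_rpow 1 one_lt_two
    have h3 := summable_log_pow_div_rpow 3 one_lt_two
    simp only [pow_one, rpow_two] at h1 h3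
    exact ((h1.add (h3.div_const (log 2 ^ 2))).mul_left 8).congr fun n => by ring
  refine IsBigO.of_bound (∑' n : ℕ, 8 * (log n + log n ^ 3 / log 2 ^ 2) / (n : ℝ) ^ 2) ?_
  filter_upwards [eventually_ge_atTop 2] with x hx
  have hL : 0 < log x := log_pos (by linarith)
  rw [norm_eq_abs, norm_of_nonneg (by positivity)]
  calc _ ≤ ∑ n ∈ Icc 1 ⌊x / 2⌋₊,
        8 * (log n + log n ^ 3 / log 2 ^ 2) / (n : ℝ) ^ 2 * (1 / log x ^ 3) := by
        refine (abs_sum_le_sum_abs _ _).trans (sum_le_sum fun n hn => ?_)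
        rw [mem_Icc, Nat.le_floor_iff (by linarith)] at hn
        exact abs_one_div_sq_mul_log_sq_sub_le hn.1 (by linarith)
    _ ≤ _ := by
        rw [← sum_mul]
        gcongr
        exact hsummable.sum_le_tsum _ fun n _ => by positivity

theorem isBigO_pi_sq_div_six_sub_sum_Icc_floor_half_mul :
    (fun x : ℝ => (π ^ 2 / 6 - ∑ n ∈ Icc 1 ⌊x / 2⌋₊, 1 / (n : ℝ) ^ 2) * (1 / log x ^ 2))
      =O[atTop] fun x => 1 / log x ^ 3 := by
  refine IsBigO.of_bound 4 ?_
  filter_upwards [eventually_ge_atTop 2] with x hx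
  have hL : 0 < log x := log_pos (by linarith)
  have hLx : log x ≤ x := (log_le_sub_one_of_pos (by linarith)).trans (by linarith)
  have hfloor : x / 2 < ⌊x / 2⌋₊ + 1 := Nat.lt_floor_add_one _
  rw [norm_eq_abs, norm_of_nonneg (by positivity), abs_mul,
    abs_of_pos (by positivity : (0 : ℝ) < 1 / log x ^ 2)]
  calc _ ≤ 2 / ((⌊x / 2⌋₊ : ℝ) + 1) * (1 / log x ^ 2) := by
        gcongr; exact abs_pi_sq_div_six_sub_sum_Icc_le _
    _ ≤ 4 / x * (1 / log x ^ 2) := by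
        gcongr ?_ * _
        rw [div_le_div_iff₀ (by positivity) (by positivity)]
        linarith
    _ = 4 / (x * log x ^ 2) := by ring
    _ ≤ 4 / (log x * log x ^ 2) := by gcongr
    _ = 4 * (1 / log x ^ 3) := by ring

theorem sum_inv_nsq_logsq_asymptotic :
    (fun x : ℝ => (∑ n ∈ Finset.Icc 1 ⌊x / 2⌋₊, 1 / ((n : ℝ) ^ 2 * (Real.log (x / n)) ^ 2)) -
        (Real.pi ^ 2 / 6) * (1 / (Real.log x) ^ 2)) =O[atTop]
      (fun x : ℝ => 1 / (Real.log x) ^ 3) := by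
  have hsplit : ∀ x : ℝ,
      (∑ n ∈ Icc 1 ⌊x / 2⌋₊, 1 / ((n : ℝ) ^ 2 * log (x / n) ^ 2)) - π ^ 2 / 6 * (1 / log x ^ 2) =
        (∑ n ∈ Icc 1 ⌊x / 2⌋₊,
          (1 / ((n : ℝ) ^ 2 * log (x / n) ^ 2) - 1 / (n : ℝ) ^ 2 * (1 / log x ^ 2))) -
        (π ^ 2 / 6 - ∑ n ∈ Icc 1 ⌊x / 2⌋₊, 1 / (n : ℝ) ^ 2) * (1 / log x ^ 2) := by
    intro x
    rw [sum_sub_distrib, ← sum_mul]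
    ring
  exact (isBigO_sum_Icc_floor_half_sub.sub
    isBigO_pi_sq_div_six_sub_sum_Icc_floor_half_mul).congr_left fun x => (hsplit x).symm
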